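/- arXiv:1901.08052 — 2 statements merged into one kernel-verified Lean document; each statement's English description precedes it below -/
import Mathlib

section
/- Let G and H be finite simple graphs, each with at least two vertices. Then θ(G × H) ≤ min{ Σ_{e ∈ E(H)} θ(G × e), Σ_{e ∈ E(G)} θ(H × e) }, where for an edge e, G × e denotes the Kronecker product of G with the one-edge graph K_2 on the two endpoints of e. -/
open SimpleGraph

/-- The Kronecker (tensor/direct/categorical) product of two simple graphs:
`(g, h)` is adjacent to `(g', h')` iff `g g' ∈ E(G)` and `h h' ∈ E(H)`. -/
def SimpleGraph.tensorProd {α β : Type*} (G : SimpleGraph α) (H : SimpleGraph β) :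
    SimpleGraph (α × β) where
  Adj x y := G.Adj x.1 y.1 ∧ H.Adj x.2 y.2
  symm := ⟨fun _ _ h => ⟨h.1.symm, h.2.symm⟩⟩
  loopless := ⟨fun _ h => G.loopless.irrefl _ h.1⟩

/-- A simple graph is planar if it has a plane drawing: an injective placement of the
vertices in `ℝ²` together with, for each edge, a simple arc joining the images of its
endpoints, such that the interior of each arc avoids all vertex images and the interiors
of arcs of distinct edges are pairwise disjoint. -/
def SimpleGraph.IsPlanar {V : Type*} (G : SimpleGraph V) : Prop :=
  ∃ (pos : V → ℝ × ℝ) (arc : G.edgeSet → ℝ → ℝ × ℝ),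
    Function.Injective pos ∧
    (∀ e : G.edgeSet, ContinuousOn (arc e) (Set.Icc 0 1) ∧
      Set.InjOn (arc e) (Set.Icc 0 1) ∧
      ∃ u v : V, (e : Sym2 V) = s(u, v) ∧ arc e 0 = pos u ∧ arc e 1 = pos v) ∧
    (∀ e : G.edgeSet, ∀ x ∈ Set.Ioo (0:ℝ) 1, ∀ w : V, arc e x ≠ pos w) ∧
    (∀ e f : G.edgeSet, e ≠ f →
      ∀ x ∈ Set.Ioo (0:ℝ) 1, ∀ y ∈ Set.Ioo (0:ℝ) 1, arc e x ≠ arc f y)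

/-- `G` has a decomposition into `t` planar subgraphs: `t` planar subgraphs of `G`
whose union is `G`. -/
def SimpleGraph.HasPlanarDecomposition {V : Type*} (G : SimpleGraph V) (t : ℕ) : Prop :=
  ∃ f : Fin t → SimpleGraph V, (∀ i, f i ≤ G) ∧ (∀ i, (f i).IsPlanar) ∧ (⨆ i, f i) = G

/-- The thickness of a graph: the minimum number of planar subgraphs whose union is `G`. -/
noncomputable def SimpleGraph.thickness {V : Type*} (G : SimpleGraph V) : ℕ :=
  sInf {t | G.HasPlanarDecomposition t}


/-!
Every edge of `G × H` lies over an edge `e` of `H`, so `G × H` is the union of the graphs `G × e`,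
`e ∈ E(H)`. Thickness is subadditive under unions (concatenate planar decompositions) and finite
for finite graphs (one planar piece per edge), which gives the first sum; the second follows from
`G × H ≅ H × G`.
-/

namespace SimpleGraph

variable {V W : Type*}

/-- Vertices go to distinct points of the `x`-axis and the single edge becomes an arch above it. -/
theorem isPlanar_of_edgeSet_subsingleton [Countable V] {G : SimpleGraph V}
    (hG : G.edgeSet.Subsingleton) : G.IsPlanar := by
  obtain ⟨f, hf⟩ := exists_injective_nat V
  have hends : ∀ e : G.edgeSet, ∃ u v, G.Adj u v ∧ (e : Sym2 V) = s(u, v) := by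
    rintro ⟨e, he⟩
    induction e using Sym2.ind with
    | h u v => exact ⟨u, v, he, rfl⟩
  choose u v huv he using hends
  have hslope : ∀ e, (f (v e) : ℝ) - f (u e) ≠ 0 := fun e h =>
    (huv e).ne (hf (Nat.cast_injective (sub_eq_zero.1 h).symm))
  refine ⟨fun w => ((f w : ℝ), 0),
    fun e t => ((f (u e) : ℝ) + t * (f (v e) - f (u e)), t * (1 - t)),
    fun a b h => hf (Nat.cast_injective (congrArg Prod.fst h)), fun e => ⟨?_, ?_, ?_⟩, ?_, ?_⟩
  · exact Continuous.continuousOn (by fun_prop)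
  · intro s _ t _ hst
    exact mul_right_cancel₀ (hslope e) (add_left_cancel (congrArg Prod.fst hst))
  · exact ⟨u e, v e, he e, by simp, by simp⟩
  · intro e t ht w hw
    have : t * (1 - t) = 0 := congrArg Prod.snd hw
    nlinarith [ht.1, ht.2]
  · exact fun e e' hne _ _ _ _ _ => hne (Subtype.ext (hG e.2 e'.2))

theorem IsPlanar.of_copy {G : SimpleGraph V} {G' : SimpleGraph W} (φ : Copy G G')
    (h : G'.IsPlanar) : G.IsPlanar := by
  obtain ⟨pos, arc, hpos, harc, havoid, hdisj⟩ := h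
  refine ⟨pos ∘ φ, fun e => arc (φ.mapEdgeSet e), hpos.comp φ.injective, fun e => ?_,
    fun e t ht w => havoid (φ.mapEdgeSet e) t ht (φ w),
    fun e e' hne => hdisj _ _ (φ.mapEdgeSet.injective.ne hne)⟩
  obtain ⟨hcont, hinj, u', v', he', h0, h1⟩ := harc (φ.mapEdgeSet e)
  refine ⟨hcont, hinj, ?_⟩
  obtain ⟨e, he⟩ := e
  induction e using Sym2.ind with
  | h a b =>
    have hmap : s(φ a, φ b) = s(u', v') := he'
    rcases Sym2.eq_iff.1 hmap with ⟨rfl, rfl⟩ | ⟨rfl, rfl⟩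
    · exact ⟨a, b, rfl, h0, h1⟩
    · exact ⟨b, a, Sym2.eq_swap, h0, h1⟩

theorem HasPlanarDecomposition.of_copy {G : SimpleGraph V} {G' : SimpleGraph W} {t : ℕ}
    (φ : Copy G G') (h : G'.HasPlanarDecomposition t) : G.HasPlanarDecomposition t := by
  obtain ⟨F, -, hplanar, hsup⟩ := h
  refine ⟨fun i => G ⊓ (F i).comap φ, fun i => inf_le_left,
    fun i => (hplanar i).of_copy ⟨⟨φ, fun h => h.2⟩, φ.injective⟩, ?_⟩
  ext a b
  simp only [iSup_adj, inf_adj, comap_adj]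
  refine ⟨fun ⟨_, hab, _⟩ => hab, fun hab => ?_⟩
  have hφ : (⨆ i, F i).Adj (φ a) (φ b) := hsup ▸ φ.toHom.map_adj hab
  obtain ⟨i, hi⟩ := iSup_adj.1 hφ
  exact ⟨i, hab, hi⟩

theorem HasPlanarDecomposition.sup {G H : SimpleGraph V} {s t : ℕ}
    (hG : G.HasPlanarDecomposition s) (hH : H.HasPlanarDecomposition t) :
    (G ⊔ H).HasPlanarDecomposition (s + t) := by
  obtain ⟨F, hFle, hFplanar, hFsup⟩ := hG
  obtain ⟨F', hF'le, hF'planar, hF'sup⟩ := hH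
  have hle : ∀ k, Sum.elim F F' k ≤ G ⊔ H :=
    Sum.forall.2 ⟨fun j => le_sup_of_le_left (hFle j), fun j => le_sup_of_le_right (hF'le j)⟩
  have hplanar : ∀ k, (Sum.elim F F' k).IsPlanar := Sum.forall.2 ⟨hFplanar, hF'planar⟩
  refine ⟨fun i => Sum.elim F F' (finSumFinEquiv.symm i), fun i => hle _, fun i => hplanar _, ?_⟩
  rw [finSumFinEquiv.symm.iSup_comp, iSup_sum, ← hFsup, ← hF'sup]
  rfl

/-- One planar piece per edge. -/
theorem hasPlanarDecomposition_natCard_edgeSet [Countable V] (G : SimpleGraph V)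
    [Finite G.edgeSet] : G.HasPlanarDecomposition (Nat.card G.edgeSet) := by
  set q := (Finite.equivFin G.edgeSet).symm
  refine ⟨fun i => fromEdgeSet {(q i : Sym2 V)}, fun i => ?_, fun i => ?_, ?_⟩
  · simp
  · refine isPlanar_of_edgeSet_subsingleton fun a ha b hb => ?_
    rw [edgeSet_fromEdgeSet] at ha hb
    exact ha.1.trans hb.1.symm
  · have hrange : Set.range (fun i => (q i : Sym2 V)) = G.edgeSet :=
      (q.surjective.range_comp _).trans Subtype.range_coe
    rw [← fromEdgeSet_iUnion, ← Set.range_eq_iUnion, hrange, fromEdgeSet_edgeSet]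

theorem thickness_le {G : SimpleGraph V} {t : ℕ} (h : G.HasPlanarDecomposition t) :
    G.thickness ≤ t :=
  Nat.sInf_le h

theorem hasPlanarDecomposition_thickness [Finite V] (G : SimpleGraph V) :
    G.HasPlanarDecomposition G.thickness :=
  Nat.sInf_mem (s := {t | G.HasPlanarDecomposition t})
    ⟨_, G.hasPlanarDecomposition_natCard_edgeSet⟩

theorem thickness_le_of_copy [Finite W] {G : SimpleGraph V} {G' : SimpleGraph W}
    (φ : Copy G G') : G.thickness ≤ G'.thickness :=
  thickness_le ((hasPlanarDecomposition_thickness G').of_copy φ)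

theorem thickness_sup_le [Finite V] (G H : SimpleGraph V) :
    (G ⊔ H).thickness ≤ G.thickness + H.thickness :=
  thickness_le ((hasPlanarDecomposition_thickness G).sup (hasPlanarDecomposition_thickness H))

theorem thickness_finsetSup_le [Finite V] {ι : Type*} (s : Finset ι) (F : ι → SimpleGraph V) :
    (s.sup F).thickness ≤ ∑ i ∈ s, (F i).thickness := by
  classical
  induction s using Finset.induction_on with
  | empty => exact thickness_le ⟨Fin.elim0, fun i => i.elim0, fun i => i.elim0, by simp⟩
  | insert a s ha ih =>
    rw [Finset.sup_insert, Finset.sum_insert ha]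
    exact (thickness_sup_le _ _).trans (by gcongr)

@[simp]
lemma tensorProd_adj {α β : Type*} {G : SimpleGraph α} {H : SimpleGraph β} {x y : α × β} :
    (G.tensorProd H).Adj x y ↔ G.Adj x.1 y.1 ∧ H.Adj x.2 y.2 :=
  Iff.rfl

def tensorProdComm {α β : Type*} (G : SimpleGraph α) (H : SimpleGraph β) :
    G.tensorProd H ≃g H.tensorProd G :=
  ⟨Equiv.prodComm α β, and_comm⟩

theorem tensorProd_eq_sup_edgeFinset {α β : Type*} (G : SimpleGraph α) (H : SimpleGraph β)
    [Fintype H.edgeSet] :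
    G.tensorProd H = H.edgeFinset.sup fun e => G.tensorProd (fromEdgeSet {e}) := by
  ext x y
  simp only [Finset.sup_eq_iSup, iSup_adj, tensorProd_adj, fromEdgeSet_adj, Set.mem_singleton_iff,
    mem_edgeFinset, exists_prop]
  refine ⟨fun ⟨hG, hH⟩ => ⟨_, hH, hG, rfl, hH.ne⟩, ?_⟩
  rintro ⟨e, he, hG, rfl, -⟩
  exact ⟨hG, he⟩

theorem thickness_tensorProd_le_sum_edgeFinset {α β : Type*} [Finite α] [Finite β]
    (G : SimpleGraph α) (H : SimpleGraph β) [Fintype H.edgeSet] :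
    (G.tensorProd H).thickness ≤
      ∑ e ∈ H.edgeFinset, (G.tensorProd (fromEdgeSet {e})).thickness := by
  rw [tensorProd_eq_sup_edgeFinset G H]
  exact thickness_finsetSup_le _ _

end SimpleGraph

theorem thickness_tensorProd_upper_bound_general {α β : Type*} [Fintype α] [Fintype β]
    (G : SimpleGraph α) (H : SimpleGraph β)
    [DecidableRel G.Adj] [DecidableRel H.Adj] :
    (G.tensorProd H).thickness ≤
      min (∑ e ∈ H.edgeFinset, (G.tensorProd (SimpleGraph.fromEdgeSet {e})).thickness)
          (∑ e ∈ G.edgeFinset, (H.tensorProd (SimpleGraph.fromEdgeSet {e})).thickness) :=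
  le_min (thickness_tensorProd_le_sum_edgeFinset G H)
    ((thickness_le_of_copy (tensorProdComm G H).toCopy).trans
      (thickness_tensorProd_le_sum_edgeFinset H G))

/-- For finite simple graphs `G`, `H` with at least two vertices each,
`θ(G × H) ≤ min{ Σ_{e ∈ E(H)} θ(G × e), Σ_{e ∈ E(G)} θ(H × e) }`, where for an edge `e`,
`G × e` is the Kronecker product of `G` with the one-edge graph on the endpoints of `e`. -/
theorem thickness_tensorProd_upper_bound {α β : Type*} [Fintype α] [Fintype β]
    (G : SimpleGraph α) (H : SimpleGraph β)
    [DecidableRel G.Adj] [DecidableRel H.Adj]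
    (hα : 2 ≤ Fintype.card α) (hβ : 2 ≤ Fintype.card β) :
    (G.tensorProd H).thickness ≤
      min (∑ e ∈ H.edgeFinset, (G.tensorProd (SimpleGraph.fromEdgeSet {e})).thickness)
          (∑ e ∈ G.edgeFinset, (H.tensorProd (SimpleGraph.fromEdgeSet {e})).thickness) :=
  thickness_tensorProd_upper_bound_general G H
end

section
/- For every integer p ≥ 0 and n = 4p + 3, there exists a planar decomposition of the Kronecker product K_{n,n,n} × K_2 into 2p + 2 planar subgraphs; in particular θ(K_{4p+3,4p+3,4p+3} × K_2) ≤ 2p + 2. -/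
open SimpleGraph

/-- The complete tripartite graph `K_{l,m,n}`. -/
def completeTripartiteGraph (l m n : ℕ) :
    SimpleGraph (Σ i : Fin 3, Fin (![l, m, n] i)) :=
  completeMultipartiteGraph fun i : Fin 3 => Fin (![l, m, n] i)

/-! `K₃ × K₂ ≅ C₆`, so `K_{n,n,n} × K₂` is the blow-up of the hexagon in which every vertex becomes
an independent set indexed by `ZMod n`. Put the six classes on six rays and draw edges straight:
two edges of one sector cross only if their pairs of radii are incomparable. Hence a "ladder",
whose edges join radius `r` at the even class to `r` or `r + 1` at the odd class, is planar.
For `n = 2m + 1` sort the edge between even index `a` and odd index `b` by its shift `b - a`: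
ladder `t < m` takes the shifts `2t + 1` and `2t + 2`, except one pair where its radius wraps
around, and a last ladder takes shift `0` together with these wrapped pairs. -/

open Function Set

namespace SimpleGraph

lemma IsPlanar.of_isContained {V W : Type*} {G : SimpleGraph V} {H : SimpleGraph W}
    (hH : H.IsPlanar) (hGH : G ⊑ H) : G.IsPlanar := by
  obtain ⟨φ⟩ := hGH
  obtain ⟨pos, arc, hpos, harc, hvert, hdisj⟩ := hH
  refine ⟨pos ∘ φ, fun e => arc (φ.mapEdgeSet e), hpos.comp φ.injective, fun e => ?_,
    fun e x hx w => hvert _ x hx (φ w),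
    fun e f hef => hdisj _ _ (φ.mapEdgeSet.injective.ne hef)⟩
  obtain ⟨hcont, hinj, u', v', hends, h₀, h₁⟩ := harc (φ.mapEdgeSet e)
  refine ⟨hcont, hinj, ?_⟩
  obtain ⟨e, he⟩ := e
  induction e with
  | h u v =>
    have : s(φ u, φ v) = s(u', v') := hends
    rcases Sym2.eq_iff.1 this with ⟨rfl, rfl⟩ | ⟨rfl, rfl⟩
    · exact ⟨u, v, rfl, h₀, h₁⟩
    · exact ⟨v, u, Sym2.eq_swap, h₀, h₁⟩

lemma HasPlanarDecomposition.comap {V W : Type*} {H : SimpleGraph W} {t : ℕ}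
    (h : H.HasPlanarDecomposition t) {φ : V → W} (hφ : Injective φ) :
    (H.comap φ).HasPlanarDecomposition t := by
  obtain ⟨parts, hle, hplanar, hsup⟩ := h
  refine ⟨fun i => (parts i).comap φ, fun i => comap_monotone ⟨φ, hφ⟩ (hle i),
    fun i => (hplanar i).of_isContained (Embedding.comap ⟨φ, hφ⟩ _).isContained, ?_⟩
  ext u v
  simp [iSup_adj, ← hsup]

end SimpleGraph

lemma Fin.even_val_add_one_iff {n : ℕ} (hn : Even (n + 1)) (c : Fin (n + 1)) :
    Even (c + 1).val ↔ ¬ Even c.val := by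
  rw [Fin.val_add_one]
  split_ifs with h
  · rw [h, Fin.val_last, ← Nat.even_add_one]
    simpa using hn
  · exact Nat.even_add_one

def hexRay : Fin 6 → ℝ × ℝ
  | 0 => (1, 0) | 1 => (1, 1) | 2 => (0, 1) | 3 => (-1, 0) | 4 => (-1, -1) | 5 => (0, -1)

lemma hexRay_ne_zero (c : Fin 6) : hexRay c ≠ 0 := by
  fin_cases c <;> simp [hexRay]

lemma smul_hexRay_ne_of_ne {c c' : Fin 6} (hne : c ≠ c') {r r' : ℝ} (hr : 0 < r)
    (hr' : 0 < r') :
    r • hexRay c ≠ r' • hexRay c' := by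
  fin_cases c <;> fin_cases c' <;> simp_all [hexRay] <;> intros <;> linarith

lemma hexSector_ne_smul_hexRay (c c' : Fin 6) {α β r : ℝ} (hα : 0 < α) (hβ : 0 < β)
    (hr : 0 < r) :
    α • hexRay c + β • hexRay (c + 1) ≠ r • hexRay c' := by
  fin_cases c <;> fin_cases c' <;> simp_all [hexRay] <;> (try intros) <;> linarith

lemma hexSector_ne_hexSector_of_ne {c c' : Fin 6} (hne : c ≠ c') {α β α' β' : ℝ}
    (hα : 0 < α) (hβ : 0 < β) (hα' : 0 < α') (hβ' : 0 < β') :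
    α • hexRay c + β • hexRay (c + 1) ≠ α' • hexRay c' + β' • hexRay (c' + 1) := by
  fin_cases c <;> fin_cases c' <;> simp_all [hexRay] <;> (try intros) <;> linarith

lemma hexSector_coeff_injective (c : Fin 6) {α β α' β' : ℝ}
    (h : α • hexRay c + β • hexRay (c + 1) = α' • hexRay c + β' • hexRay (c + 1)) :
    α = α' ∧ β = β' := by
  fin_cases c <;> simp [hexRay, Prod.ext_iff] at h ⊢ <;> constructor <;> linarith

lemma eq_of_hexSector_crossing {a b a' b' x y : ℝ} (ha : 0 < a) (hb' : 0 < b')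
    (hx : x ∈ Ioo 0 1) (hy : y ∈ Ioo 0 1)
    (h₁ : (1 - x) * a = (1 - y) * a') (h₂ : x * b = y * b')
    (hcomp : (a ≤ a' ∧ b ≤ b') ∨ (a' ≤ a ∧ b' ≤ b)) : x = y := by
  obtain ⟨hx₀, hx₁⟩ := hx
  obtain ⟨hy₀, hy₁⟩ := hy
  rcases hcomp with ⟨ha', hb⟩ | ⟨ha', hb⟩ <;> apply le_antisymm <;> nlinarith

section RayDrawing

variable {V : Type*}

def hexRayPos (cls : V → Fin 6) (rad : V → ℝ) (v : V) : ℝ × ℝ := rad v • hexRay (cls v)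

variable {cls : V → Fin 6} {rad : V → ℝ}

lemma hexRayPos_injective (hrad : ∀ v, 0 < rad v)
    (hinj : ∀ u v, cls u = cls v → rad u = rad v → u = v) :
    Injective (hexRayPos cls rad) := by
  intro u v h
  by_cases hc : cls u = cls v
  · refine hinj u v hc (smul_left_injective ℝ (hexRay_ne_zero (cls v)) ?_)
    simpa only [hexRayPos, hc] using h
  · exact absurd h (smul_hexRay_ne_of_ne hc (hrad u) (hrad v))

lemma lineMap_hexRayPos {u v : V} (huv : cls v = cls u + 1) (t : ℝ) :
    AffineMap.lineMap (hexRayPos cls rad u) (hexRayPos cls rad v) t =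
      ((1 - t) * rad u) • hexRay (cls u) + (t * rad v) • hexRay (cls u + 1) := by
  rw [AffineMap.lineMap_apply_module, hexRayPos, hexRayPos, huv, smul_smul, smul_smul]

lemma lineMap_hexRayPos_ne_hexRayPos (hrad : ∀ v, 0 < rad v) {u v : V} (huv : cls v = cls u + 1)
    {t : ℝ} (ht : t ∈ Ioo 0 1) (w : V) :
    AffineMap.lineMap (hexRayPos cls rad u) (hexRayPos cls rad v) t ≠ hexRayPos cls rad w := by
  rw [lineMap_hexRayPos huv]
  exact hexSector_ne_smul_hexRay _ _ (mul_pos (by linarith [ht.2]) (hrad u))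
    (mul_pos ht.1 (hrad v)) (hrad w)

lemma lineMap_hexRayPos_ne_lineMap (hrad : ∀ v, 0 < rad v)
    (hinj : ∀ u v, cls u = cls v → rad u = rad v → u = v) {u v u' v' : V}
    (huv : cls v = cls u + 1) (huv' : cls v' = cls u' + 1) (hne : s(u, v) ≠ s(u', v'))
    (hcomp : cls u = cls u' →
      (rad u ≤ rad u' ∧ rad v ≤ rad v') ∨ (rad u' ≤ rad u ∧ rad v' ≤ rad v))
    {x y : ℝ} (hx : x ∈ Ioo 0 1) (hy : y ∈ Ioo 0 1) :
    AffineMap.lineMap (hexRayPos cls rad u) (hexRayPos cls rad v) x ≠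
      AffineMap.lineMap (hexRayPos cls rad u') (hexRayPos cls rad v') y := by
  have pos_left {t} (ht : t ∈ Ioo (0 : ℝ) 1) (w : V) : 0 < (1 - t) * rad w :=
    mul_pos (by linarith [ht.2]) (hrad w)
  have pos_right {t} (ht : t ∈ Ioo (0 : ℝ) 1) (w : V) : 0 < t * rad w := mul_pos ht.1 (hrad w)
  rw [lineMap_hexRayPos huv, lineMap_hexRayPos huv']
  by_cases hc : cls u = cls u'
  · rw [← hc]
    intro h
    obtain ⟨h₁, h₂⟩ := hexSector_coeff_injective _ h
    obtain rfl := eq_of_hexSector_crossing (hrad u) (hrad v') hx hy h₁ h₂ (hcomp hc)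
    have hx₀ : x ≠ 0 := hx.1.ne'
    have hx₁ : 1 - x ≠ 0 := by linarith [hx.2]
    have hu : u = u' := hinj _ _ hc (mul_left_cancel₀ hx₁ h₁)
    have hv : v = v' := hinj _ _ (by rw [huv, huv', hc]) (mul_left_cancel₀ hx₀ h₂)
    exact hne (by rw [hu, hv])
  · exact hexSector_ne_hexSector_of_ne hc (pos_left hx u) (pos_right hx v) (pos_left hy u')
      (pos_right hy v')

theorem SimpleGraph.isPlanar_of_hexRays {H : SimpleGraph V} (hrad : ∀ v, 0 < rad v)
    (hinj : ∀ u v, cls u = cls v → rad u = rad v → u = v)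
    (horient : ∀ u v, H.Adj u v → cls v = cls u + 1 ∨ cls u = cls v + 1)
    (hcomp : ∀ u v u' v', H.Adj u v → H.Adj u' v' →
      cls v = cls u + 1 → cls v' = cls u' + 1 → cls u = cls u' →
      (rad u ≤ rad u' ∧ rad v ≤ rad v') ∨ (rad u' ≤ rad u ∧ rad v' ≤ rad v)) :
    H.IsPlanar := by
  have horiented (e : H.edgeSet) :
      ∃ u v, (e : Sym2 V) = s(u, v) ∧ H.Adj u v ∧ cls v = cls u + 1 := by
    obtain ⟨e, he⟩ := e
    induction e with
    | h u v =>
      rcases horient u v he with h | h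
      · exact ⟨u, v, rfl, he, h⟩
      · exact ⟨v, u, Sym2.eq_swap, he.symm, h⟩
  choose tail head hends hadj hcls using horiented
  have hpos := hexRayPos_injective hrad hinj
  refine ⟨hexRayPos cls rad,
    fun e => AffineMap.lineMap (hexRayPos cls rad (tail e)) (hexRayPos cls rad (head e)), hpos,
    fun e => ⟨?_, ?_, tail e, head e, hends e, by simp, by simp⟩,
    fun e x hx w => lineMap_hexRayPos_ne_hexRayPos hrad (hcls e) hx w,
    fun e f hef x hx y hy => lineMap_hexRayPos_ne_lineMap hrad hinj (hcls e) (hcls f) ?_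
      (hcomp _ _ _ _ (hadj e) (hadj f) (hcls e) (hcls f)) hx hy⟩
  · exact AffineMap.lineMap_continuous.continuousOn
  · exact (AffineMap.lineMap_injective ℝ (hpos.ne (hadj e).ne)).injOn
  · rw [← hends, ← hends]
    exact Subtype.coe_injective.ne hef

end RayDrawing

namespace SimpleGraph

def hexBlowup (α : Type*) : SimpleGraph (Fin 6 × α) := (cycleGraph 6).comap Prod.fst

variable {α : Type*}

def ladderRadius (f g : α → ℕ) (v : Fin 6 × α) : ℕ := if Even v.1.val then f v.2 else g v.2

def ladder (f g : α → ℕ) : SimpleGraph (Fin 6 × α) :=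
  hexBlowup α ⊓ fromRel fun u v => Even u.1.val ∧ (g v.2 = f u.2 ∨ g v.2 = f u.2 + 1)

lemma hexBlowup_adj {u v : Fin 6 × α} :
    (hexBlowup α).Adj u v ↔ v.1 = u.1 + 1 ∨ u.1 = v.1 + 1 := by
  rw [hexBlowup, comap_adj, cycleGraph_adj, sub_eq_iff_eq_add, sub_eq_iff_eq_add, or_comm,
    add_comm (1 : Fin 6), add_comm (1 : Fin 6)]

lemma ladderRadius_step {f g : α → ℕ} {u v : Fin 6 × α} (h : (ladder f g).Adj u v)
    (huv : v.1 = u.1 + 1) :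
    if Even u.1.val then
      ladderRadius f g v = ladderRadius f g u ∨ ladderRadius f g v = ladderRadius f g u + 1
    else
      ladderRadius f g u = ladderRadius f g v ∨ ladderRadius f g u = ladderRadius f g v + 1 := by
  obtain ⟨-, -, ⟨hu, hstep⟩ | ⟨hv, hstep⟩⟩ := h
  · have hv : ¬ Even v.1.val := by
      rw [huv, Fin.even_val_add_one_iff (by decide)]
      exact not_not.2 hu
    simpa [ladderRadius, hu, hv] using hstep
  · have hu : ¬ Even u.1.val := by rwa [huv, Fin.even_val_add_one_iff (by decide)] at hv
    simpa [ladderRadius, hu, hv] using hstep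

lemma ladder_isPlanar {f g : α → ℕ} (hf : Injective f) (hg : Injective g) :
    (ladder f g).IsPlanar := by
  refine isPlanar_of_hexRays (cls := Prod.fst) (rad := fun v => (ladderRadius f g v : ℝ) + 1)
    (fun v => by positivity) ?_ (fun u v h => hexBlowup_adj.1 h.1) ?_
  · intro u v hc hr
    have hr' : ladderRadius f g u = ladderRadius f g v := by exact_mod_cast add_right_cancel hr
    refine Prod.ext hc ?_
    by_cases hu : Even u.1.val
    · exact hf (by simpa [ladderRadius, hu, ← hc] using hr')
    · exact hg (by simpa [ladderRadius, hu, ← hc] using hr')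
  · intro u v u' v' h h' huv huv' hc
    have hs := ladderRadius_step h huv
    have hs' := ladderRadius_step h' huv'
    rw [← hc] at hs'
    simp only [add_le_add_iff_right, Nat.cast_le]
    split_ifs at hs hs' <;> omega

theorem hexBlowup_hasPlanarDecomposition_of_cover {t : ℕ} (f g : Fin t → α → ℕ)
    (hf : ∀ i, Injective (f i)) (hg : ∀ i, Injective (g i))
    (hcover : ∀ a b, ∃ i, g i b = f i a ∨ g i b = f i a + 1) :
    (hexBlowup α).HasPlanarDecomposition t := by
  refine ⟨fun i => ladder (f i) (g i), fun i => inf_le_left,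
    fun i => ladder_isPlanar (hf i) (hg i), le_antisymm (iSup_le fun i => inf_le_left) ?_⟩
  intro u v huv
  rw [iSup_adj]
  have hparity : Even u.1.val ∨ Even v.1.val := by
    rcases hexBlowup_adj.1 huv with h | h <;> rw [h, Fin.even_val_add_one_iff (by decide)] <;> tauto
  rcases hparity with hu | hv
  · obtain ⟨i, hi⟩ := hcover u.2 v.2
    exact ⟨i, huv, huv.ne, Or.inl ⟨hu, hi⟩⟩
  · obtain ⟨i, hi⟩ := hcover v.2 u.2
    exact ⟨i, huv, huv.ne, Or.inr ⟨hv, hi⟩⟩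

end SimpleGraph

lemma ZMod.val_add_one_of_ne_neg_one {n : ℕ} [NeZero n] {x : ZMod n} (hx : x ≠ -1) :
    (x + 1).val = x.val + 1 := by
  have hlt : x.val + 1 < n := by
    refine lt_of_le_of_ne x.val_lt ?_
    intro h
    apply hx
    have := congrArg (Nat.cast : ℕ → ZMod n) h
    rw [Nat.cast_add, ZMod.natCast_zmod_val, ZMod.natCast_self, Nat.cast_one] at this
    exact eq_neg_of_add_eq_zero_left this
  rw [← ZMod.val_cast_of_lt hlt, Nat.cast_add, ZMod.natCast_zmod_val, Nat.cast_one]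

section OddBlowup

variable (m : ℕ)

-- The wrapped pair `(m - 1 - t, m + 1 + t)` of ladder `t` gets the radii `2t + 2` and `2t + 3`.
def foldRadius (a : ZMod (2 * m + 1)) : ℕ :=
  if a.val ≤ m then 2 * (m - a.val) else 2 * (a.val - m) + 1

def evenRadius : Fin (m + 1) → ZMod (2 * m + 1) → ℕ :=
  Fin.lastCases (foldRadius m) fun t a => (a + t.val - m).val

def oddRadius : Fin (m + 1) → ZMod (2 * m + 1) → ℕ :=
  Fin.lastCases (foldRadius m) fun t b => (b - t.val - m - 1).val

lemma foldRadius_injective : Injective (foldRadius m) := by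
  intro a b h
  apply ZMod.val_injective
  unfold foldRadius at h
  split_ifs at h <;> omega

lemma evenRadius_injective (i : Fin (m + 1)) : Injective (evenRadius m i) := by
  induction i using Fin.lastCases with
  | last => simpa [evenRadius] using foldRadius_injective m
  | cast t =>
    intro a b h
    simp only [evenRadius, Fin.lastCases_castSucc] at h
    simpa using ZMod.val_injective _ h

lemma oddRadius_injective (i : Fin (m + 1)) : Injective (oddRadius m i) := by
  induction i using Fin.lastCases with
  | last => simpa [oddRadius] using foldRadius_injective m
  | cast t =>
    intro a b h
    simp only [oddRadius, Fin.lastCases_castSucc] at h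
    simpa using ZMod.val_injective _ h

lemma foldRadius_natCast_of_lt (k : ℕ) (hk : k < 2 * m + 1) :
    foldRadius m k = if k ≤ m then 2 * (m - k) else 2 * (k - m) + 1 := by
  rw [foldRadius, ZMod.val_cast_of_lt hk]

lemma foldRadius_add_of_wrap {t : ℕ} (ht : t < m) {a : ZMod (2 * m + 1)}
    (hwrap : a + t - m = -1) :
    foldRadius m (a + (2 * (t + 1) : ℕ)) = foldRadius m a + 1 := by
  have ha : a = ((m - 1 - t : ℕ) : ZMod (2 * m + 1)) := by
    rw [Nat.cast_sub (by omega), Nat.cast_sub (by omega)]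
    linear_combination hwrap
  have hb : a + (2 * (t + 1) : ℕ) = ((m + t + 1 : ℕ) : ZMod (2 * m + 1)) := by
    rw [ha, Nat.cast_sub (by omega), Nat.cast_sub (by omega)]
    push_cast
    ring
  rw [hb, ha, foldRadius_natCast_of_lt _ _ (by omega), foldRadius_natCast_of_lt _ _ (by omega)]
  split_ifs <;> omega

lemma exists_oddRadius_eq_evenRadius_or_add_one (a b : ZMod (2 * m + 1)) :
    ∃ i, oddRadius m i b = evenRadius m i a ∨ oddRadius m i b = evenRadius m i a + 1 := by
  obtain ⟨s, rfl⟩ : ∃ s, b = a + s := ⟨b - a, by ring⟩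
  rw [← ZMod.natCast_zmod_val s]
  have hlt := s.val_lt
  obtain ⟨k, hk | hk⟩ := Nat.even_or_odd' s.val
  · rw [hk]
    obtain _ | t := k
    · exact ⟨Fin.last m, Or.inl (by simp [evenRadius, oddRadius])⟩
    have ht : t < m := by omega
    by_cases hwrap : a + t - m = -1
    · refine ⟨Fin.last m, Or.inr ?_⟩
      simpa only [evenRadius, oddRadius, Fin.lastCases_last] using foldRadius_add_of_wrap m ht hwrap
    · refine ⟨Fin.castSucc ⟨t, ht⟩, Or.inr ?_⟩
      simp only [evenRadius, oddRadius, Fin.lastCases_castSucc]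
      rw [← ZMod.val_add_one_of_ne_neg_one hwrap]
      push_cast
      ring_nf
  · have ht : k < m := by omega
    refine ⟨Fin.castSucc ⟨k, ht⟩, Or.inl ?_⟩
    simp only [evenRadius, oddRadius, Fin.lastCases_castSucc, hk]
    push_cast
    ring_nf

theorem SimpleGraph.hexBlowup_zmod_hasPlanarDecomposition :
    (hexBlowup (ZMod (2 * m + 1))).HasPlanarDecomposition (m + 1) :=
  hexBlowup_hasPlanarDecomposition_of_cover _ _ (evenRadius_injective m) (oddRadius_injective m)
    (exists_oddRadius_eq_evenRadius_or_add_one m)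

end OddBlowup

-- Chinese remaindering: `4 ≡ 1 [MOD 3]`, `4 ≡ 0 [MOD 2]`, `3 ≡ 0 [MOD 3]`, `3 ≡ 1 [MOD 2]`.
def hexClass (i : Fin 3) (b : Fin 2) : Fin 6 :=
  4 * Fin.castLE (by norm_num) i + 3 * Fin.castLE (by norm_num) b

lemma hexClass_adj_iff :
    ∀ i j b b', (cycleGraph 6).Adj (hexClass i b) (hexClass j b') ↔ i ≠ j ∧ b ≠ b' := by
  decide

lemma hexClass_injective : ∀ i j b b', hexClass i b = hexClass j b' → i = j ∧ b = b' := by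
  decide

def tripartiteToHex (n : ℕ) : (Σ i : Fin 3, Fin (![n, n, n] i)) × Fin 2 → Fin 6 × ZMod n :=
  fun v => (hexClass v.1.1 v.2, (v.1.2.val : ZMod n))

lemma tripartiteToHex_injective (n : ℕ) : Injective (tripartiteToHex n) := by
  rintro ⟨⟨i, a⟩, b⟩ ⟨⟨j, a'⟩, b'⟩ h
  obtain ⟨rfl, rfl⟩ := hexClass_injective i j b b' (Prod.ext_iff.1 h).1
  have hn : ![n, n, n] i = n := by fin_cases i <;> rfl
  have ha : ((a.val : ℕ) : ZMod n).val = ((a'.val : ℕ) : ZMod n).val :=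
    congrArg ZMod.val (Prod.ext_iff.1 h).2
  rw [ZMod.val_cast_of_lt (a.isLt.trans_eq hn), ZMod.val_cast_of_lt (a'.isLt.trans_eq hn)] at ha
  rw [Fin.ext ha]

lemma tensorProd_top_eq_comap_hexBlowup (n : ℕ) :
    (completeTripartiteGraph n n n).tensorProd (⊤ : SimpleGraph (Fin 2)) =
      (SimpleGraph.hexBlowup (ZMod n)).comap (tripartiteToHex n) := by
  ext u v
  exact (hexClass_adj_iff _ _ _ _).symm

/-- For `p ≥ 0` and `n = 4p + 3`, `K_{n,n,n} × K₂` has a planar decomposition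
into `2p + 2` planar subgraphs; in particular `θ(K_{4p+3,4p+3,4p+3} × K₂) ≤ 2p + 2`. -/
theorem completeTripartite_tensorProd_K2_decomposition_of_4p3 (p : ℕ) :
    ((completeTripartiteGraph (4 * p + 3) (4 * p + 3) (4 * p + 3)).tensorProd
        (⊤ : SimpleGraph (Fin 2))).HasPlanarDecomposition (2 * p + 2) ∧
    ((completeTripartiteGraph (4 * p + 3) (4 * p + 3) (4 * p + 3)).tensorProd
        (⊤ : SimpleGraph (Fin 2))).thickness ≤ 2 * p + 2 := by
  have hblowup : (hexBlowup (ZMod (4 * p + 3))).HasPlanarDecomposition (2 * p + 2) := by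
    have h := hexBlowup_zmod_hasPlanarDecomposition (2 * p + 1)
    rwa [show 2 * (2 * p + 1) + 1 = 4 * p + 3 by ring] at h
  have hdec : ((completeTripartiteGraph (4 * p + 3) (4 * p + 3) (4 * p + 3)).tensorProd
      (⊤ : SimpleGraph (Fin 2))).HasPlanarDecomposition (2 * p + 2) := by
    rw [tensorProd_top_eq_comap_hexBlowup]
    exact hblowup.comap (tripartiteToHex_injective _)
  exact ⟨hdec, Nat.sInf_le hdec⟩
end
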